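/- For every s ∈ ℂ, the series u(y) = Σ_{j=0}^∞ e^{−(s+j)y}/(j!·Γ(2s+j+1)) converges absolutely for every y ∈ ℝ, and u is twice differentiable on ℝ and satisfies the Yukawa Schrödinger equation −u''(y) + e^{−y}·u(y) + s²·u(y) = 0 for all y ∈ ℝ. (Here 1/Γ denotes the entire reciprocal Gamma function, vanishing at non-positive integer arguments of Γ; replacing s by −s gives a second solution.) -/

import Mathlib

/-- The series solution `u(y) = Σ_{j=0}^∞ e^{−(s+j)y}/(j!·Γ(2s+j+1))` of the Yukawa
Schrödinger equation (with the reciprocal Gamma convention: Mathlib's `Complex.Gamma`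
vanishes at its poles). -/
noncomputable def uYuk (s : ℂ) (y : ℝ) : ℂ :=
  ∑' j : ℕ, Complex.exp (-(s + (j : ℂ)) * (y : ℂ)) /
    ((j.factorial : ℂ) * Complex.Gamma (2 * s + (j : ℂ) + 1))

/-!
With `c_j = 1/(j! Γ(2s+j+1))`, the factor `1/Γ(2s+j+1)` is bounded in `j` (once `‖2s+j‖ ≥ 1`
it is non-increasing), so `c_j = O(1/j!)` and every termwise derivative
`Σ c_j (-(s+j))^p e^{-(s+j)y}` converges locally uniformly. Since `e^{-y} e^{-(s+j)y}` is the
next exponential, the equation `u'' - s²u = e^{-y}u` reduces to the recurrence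
`((s+j+1)² - s²) c_{j+1} = c_j`, which is `Γ(z+1) = zΓ(z)` in the form `1/Γ(z) = z/Γ(z+1)`,
valid also at the poles.
-/

open Complex Nat

section ExpSeries

variable (s : ℂ) (c : ℕ → ℂ)

/-- The `p`-th `y`-derivative of the term `c j * e^{-(s+j)y}`. -/
noncomputable def expTerm (p j : ℕ) (y : ℝ) : ℂ :=
  (-(s + j)) ^ p * exp (-(s + j) * y) * c j

theorem hasDerivAt_expTerm (p j : ℕ) (y : ℝ) :
    HasDerivAt (expTerm s c p j) (expTerm s c (p + 1) j y) y := by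
  have hexp : HasDerivAt (fun z : ℂ => exp (-(s + j) * z)) (exp (-(s + j) * y) * -(s + j)) y := by
    simpa using ((hasDerivAt_id (y : ℂ)).const_mul (-(s + j))).cexp
  exact ((hexp.comp_ofReal.const_mul ((-(s + j)) ^ p)).mul_const (c j)).congr_deriv
    (by simp only [expTerm]; ring)

theorem norm_expTerm_le (p j : ℕ) {y R : ℝ} (hy : |y| ≤ R) :
    ‖expTerm s c p j y‖ ≤ p ! * Real.exp ((‖s‖ + j) * (R + 1)) * ‖c j‖ := by
  have hsj : ‖-(s + j)‖ ≤ ‖s‖ + j := by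
    simpa only [norm_neg, norm_natCast] using norm_add_le s (j : ℂ)
  have hpow : ‖-(s + j)‖ ^ p ≤ p ! * Real.exp (‖s‖ + j) := by
    have := Real.pow_div_factorial_le_exp (x := ‖s‖ + j) (by positivity) p
    rw [div_le_iff₀ (by positivity)] at this
    calc ‖-(s + j)‖ ^ p ≤ (‖s‖ + j) ^ p := by gcongr
      _ ≤ p ! * Real.exp (‖s‖ + j) := by linarith
  have hexp : ‖exp (-(s + j) * y)‖ ≤ Real.exp ((‖s‖ + j) * R) := by
    rw [norm_exp]
    gcongr
    calc (-(s + j) * y).re = -((s.re + j) * y) := by simp [mul_re]; ring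
      _ ≤ |s.re + j| * |y| := by rw [← abs_mul]; exact neg_le_abs _
      _ ≤ (‖s‖ + j) * R := by
        gcongr
        exact (abs_add_le _ _).trans (by simp [abs_re_le_norm])
  calc ‖expTerm s c p j y‖ = ‖-(s + j)‖ ^ p * ‖exp (-(s + j) * y)‖ * ‖c j‖ := by
        simp only [expTerm, norm_mul, norm_pow]
    _ ≤ p ! * Real.exp (‖s‖ + j) * Real.exp ((‖s‖ + j) * R) * ‖c j‖ := by gcongr
    _ = p ! * Real.exp ((‖s‖ + j) * (R + 1)) * ‖c j‖ := by
        rw [mul_assoc (p ! : ℝ), ← Real.exp_add]; ring_nf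

variable {c}

theorem summable_expTerm_bound (hc : ∀ r : ℝ, Summable fun j => ‖c j‖ * Real.exp (j * r))
    (p : ℕ) (R : ℝ) :
    Summable fun j : ℕ => p ! * Real.exp ((‖s‖ + j) * (R + 1)) * ‖c j‖ := by
  refine ((hc (R + 1)).mul_left (p ! * Real.exp (‖s‖ * (R + 1)))).congr fun j => ?_
  rw [add_mul, Real.exp_add]
  ring

theorem summable_norm_expTerm (hc : ∀ r : ℝ, Summable fun j => ‖c j‖ * Real.exp (j * r))
    (p : ℕ) (y : ℝ) : Summable fun j => ‖expTerm s c p j y‖ :=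
  (summable_expTerm_bound s hc p |y|).of_nonneg_of_le (fun _ => norm_nonneg _)
    fun j => norm_expTerm_le s c p j le_rfl

theorem hasDerivAt_tsum_expTerm (hc : ∀ r : ℝ, Summable fun j => ‖c j‖ * Real.exp (j * r))
    (p : ℕ) (y : ℝ) :
    HasDerivAt (fun y => ∑' j, expTerm s c p j y) (∑' j, expTerm s c (p + 1) j y) y := by
  have hball : ∀ z ∈ Metric.ball y 1, |z| ≤ |y| + 1 := fun z hz => by
    have := abs_sub_abs_le_abs_sub z y
    rw [Metric.mem_ball, Real.dist_eq] at hz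
    linarith
  exact hasDerivAt_tsum_of_isPreconnected (summable_expTerm_bound s hc (p + 1) (|y| + 1))
    Metric.isOpen_ball (convex_ball y 1).isPreconnected
    (fun j z _ => hasDerivAt_expTerm s c p j z)
    (fun j z hz => norm_expTerm_le s c (p + 1) j (hball z hz)) (Metric.mem_ball_self one_pos)
    (summable_norm_expTerm s hc p y).of_norm (Metric.mem_ball_self one_pos)

/-- Multiplying by `e^{-y}` shifts the series by one index, which the recurrence undoes. -/
theorem tsum_expTerm_two_sub (hc : ∀ r : ℝ, Summable fun j => ‖c j‖ * Real.exp (j * r))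
    (hrec : ∀ j : ℕ, ((s + (j + 1)) ^ 2 - s ^ 2) * c (j + 1) = c j) (y : ℝ) :
    ∑' j, expTerm s c 2 j y - s ^ 2 * ∑' j, expTerm s c 0 j y =
      exp (-y) * ∑' j, expTerm s c 0 j y := by
  have h0 := (summable_norm_expTerm s hc 0 y).of_norm
  have h2 := (summable_norm_expTerm s hc 2 y).of_norm
  have hzero : expTerm s c 2 0 y - s ^ 2 * expTerm s c 0 0 y = 0 := by
    simp only [expTerm, CharP.cast_eq_zero, add_zero, neg_sq, pow_zero, one_mul]
    ring
  have hshift (j : ℕ) :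
      expTerm s c 2 (j + 1) y - s ^ 2 * expTerm s c 0 (j + 1) y =
        exp (-y) * expTerm s c 0 j y := by
    simp only [expTerm, neg_sq, pow_zero, one_mul, Nat.cast_succ]
    rw [← hrec j, show -(s + (j + 1)) * (y : ℂ) = -y + -(s + j) * y by ring, exp_add]
    ring
  rw [← tsum_mul_left, ← h2.tsum_sub (h0.mul_left (s ^ 2)),
    (h2.sub (h0.mul_left (s ^ 2))).tsum_eq_zero_add, hzero, zero_add, ← tsum_mul_left]
  exact tsum_congr hshift

end ExpSeries

theorem Complex.exists_norm_inv_Gamma_add_nat_le (z : ℂ) :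
    ∃ C, ∀ j : ℕ, ‖(Gamma (z + j))⁻¹‖ ≤ C := by
  obtain ⟨N, hN⟩ := exists_nat_ge (‖z‖ + 1)
  have hstep (j : ℕ) (hj : N ≤ j) : ‖(Gamma (z + (j + 1 : ℕ)))⁻¹‖ ≤ ‖(Gamma (z + j))⁻¹‖ := by
    have h1 : 1 ≤ ‖z + j‖ := by
      have := norm_sub_norm_le (j : ℂ) (-z)
      rw [sub_neg_eq_add, add_comm, norm_neg, norm_natCast] at this
      have : (N : ℝ) ≤ j := by exact_mod_cast hj
      linarith
    rw [one_div_Gamma_eq_self_mul_one_div_Gamma_add_one (z + j), norm_mul, Nat.cast_succ,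
      ← add_assoc]
    exact le_mul_of_one_le_left (norm_nonneg _) h1
  refine ⟨∑ i ∈ Finset.range (N + 1), ‖(Gamma (z + i))⁻¹‖, fun j => ?_⟩
  have hle : ∀ i ≤ N, ‖(Gamma (z + i))⁻¹‖ ≤ ∑ i ∈ Finset.range (N + 1), ‖(Gamma (z + i))⁻¹‖ :=
    fun i hi => Finset.single_le_sum (f := fun i : ℕ => ‖(Gamma (z + i))⁻¹‖)
      (fun _ _ => norm_nonneg _) (Finset.mem_range_succ_iff.mpr hi)
  rcases le_total j N with hj | hj
  · exact hle j hj
  · refine le_trans ?_ (hle N le_rfl)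
    induction j, hj using Nat.le_induction with
    | base => exact le_rfl
    | succ j hj ih => exact (hstep j hj).trans ih

noncomputable def yukCoeff (s : ℂ) (j : ℕ) : ℂ :=
  ((j ! : ℂ) * Gamma (2 * s + j + 1))⁻¹

theorem yukCoeff_recurrence (s : ℂ) (j : ℕ) :
    ((s + (j + 1)) ^ 2 - s ^ 2) * yukCoeff s (j + 1) = yukCoeff s j := by
  have hΓ := one_div_Gamma_eq_self_mul_one_div_Gamma_add_one (2 * s + j + 1)
  simp only [yukCoeff, factorial_succ, cast_mul, cast_succ, mul_inv] at hΓ ⊢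
  rw [hΓ, show 2 * s + (j + 1) + 1 = 2 * s + j + 1 + 1 by ring]
  field_simp
  ring

theorem summable_norm_yukCoeff_mul_exp (s : ℂ) (r : ℝ) :
    Summable fun j => ‖yukCoeff s j‖ * Real.exp (j * r) := by
  obtain ⟨C, hC⟩ := exists_norm_inv_Gamma_add_nat_le (2 * s + 1)
  refine ((Real.summable_pow_div_factorial (Real.exp r)).mul_left C).of_nonneg_of_le
    (fun _ => by positivity) fun j => ?_
  have hΓ : ‖(Gamma (2 * s + j + 1))⁻¹‖ ≤ C := by
    simpa only [add_right_comm] using hC j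
  rw [yukCoeff, mul_inv, norm_mul, norm_inv, norm_natCast, ← Real.exp_nat_mul]
  calc _ = ‖(Gamma (2 * s + j + 1))⁻¹‖ * (Real.exp (j * r) / j !) := by ring
    _ ≤ C * (Real.exp (j * r) / j !) := by gcongr

theorem uYuk_eq_tsum_expTerm (s : ℂ) :
    uYuk s = fun y => ∑' j, expTerm s (yukCoeff s) 0 j y := by
  ext y
  simp only [uYuk, expTerm, yukCoeff, pow_zero, one_mul, div_eq_mul_inv]

/-- the series converges absolutely for every `y ∈ ℝ`, and `u` is twice
differentiable on `ℝ` and satisfies `−u'' + e^{−y}u + s²u = 0`. -/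
theorem uYuk_solves_schrodinger (s : ℂ) :
    (∀ y : ℝ, Summable fun j : ℕ =>
      ‖Complex.exp (-(s + (j : ℂ)) * (y : ℂ)) /
        ((j.factorial : ℂ) * Complex.Gamma (2 * s + (j : ℂ) + 1))‖) ∧
    ∃ u' u'' : ℝ → ℂ,
      (∀ y : ℝ, HasDerivAt (uYuk s) (u' y) y) ∧
      (∀ y : ℝ, HasDerivAt u' (u'' y) y) ∧
      (∀ y : ℝ, -u'' y + (Real.exp (-y) : ℂ) * uYuk s y + s ^ 2 * uYuk s y = 0) := by
  have hc := summable_norm_yukCoeff_mul_exp s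
  refine ⟨fun y => ?_, fun y => ∑' j, expTerm s (yukCoeff s) 1 j y,
    fun y => ∑' j, expTerm s (yukCoeff s) 2 j y, fun y => ?_,
    hasDerivAt_tsum_expTerm s hc 1, fun y => ?_⟩
  · simpa only [expTerm, yukCoeff, pow_zero, one_mul, div_eq_mul_inv]
      using summable_norm_expTerm s hc 0 y
  · rw [uYuk_eq_tsum_expTerm]
    exact hasDerivAt_tsum_expTerm s hc 0 y
  · rw [uYuk_eq_tsum_expTerm, ofReal_exp, ofReal_neg]
    linear_combination -tsum_expTerm_two_sub s hc (yukCoeff_recurrence s) y
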